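/- For α ≠ 0 and all real β, γ, the pair (P^{αβγ}, h_α) with h_α(x) = (x₁² + x₂²)/(2α) is a Hamilton–Poisson realization of the Rabinovich system: P^{αβγ}(x)·∇h_α(x) = X(x) for all x ∈ ℝ³. -/

import Mathlib

open Matrix

/-- The Rabinovich vector field X(x₁,x₂,x₃) = (x₂x₃, −x₁x₃, x₁x₂). -/
def rabinovichField (x : Fin 3 → ℝ) : Fin 3 → ℝ :=
  ![x 1 * x 2, -(x 0 * x 2), x 0 * x 1]

/-- The gradient of a function on ℝ³. -/
noncomputable def grad (f : (Fin 3 → ℝ) → ℝ) (x : Fin 3 → ℝ) : Fin 3 → ℝ :=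
  fun j => fderiv ℝ f x (Pi.single j 1)

/-- The matrix field P^{αβγ}. -/
noncomputable def Pabc (α β γ : ℝ) (x : Fin 3 → ℝ) : Matrix (Fin 3) (Fin 3) ℝ :=
  !![0, α * x 2, -((α - β / 2 + γ / 2) * x 1);
     -(α * x 2), 0, -((β / 2 - γ / 2) * x 0);
     (α - β / 2 + γ / 2) * x 1, (β / 2 - γ / 2) * x 0, 0]

/-- The zero last entry kills the third column, and the `β, γ` terms of the last row cancel. -/
lemma Pabc_mulVec_eq_rabinovichField {α : ℝ} (β γ : ℝ) (hα : α ≠ 0) (x : Fin 3 → ℝ) :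
    Pabc α β γ x *ᵥ ![x 0 / α, x 1 / α, 0] = rabinovichField x := by
  ext i
  fin_cases i <;> simp [Pabc, rabinovichField, mulVec_cons] <;> field_simp
  ring

lemma grad_sq_add_sq_div (α : ℝ) (x : Fin 3 → ℝ) :
    grad (fun y => (y 0 ^ 2 + y 1 ^ 2) / (2 * α)) x = ![x 0 / α, x 1 / α, 0] := by
  have hsq (i : Fin 3) := (hasFDerivAt_apply (𝕜 := ℝ) i x).pow 2
  have hf : HasFDerivAt (fun y : Fin 3 → ℝ => (y 0 ^ 2 + y 1 ^ 2) / (2 * α)) _ x :=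
    ((hsq 0).add (hsq 1)).mul_const (2 * α)⁻¹
  ext j
  rw [grad, hf.fderiv]
  fin_cases j <;> simp <;> field_simp

/-- For α ≠ 0, the pair (P^{αβγ}, h_α) with h_α(x) = (x₁² + x₂²)/(2α) is a
Hamilton–Poisson realization of the Rabinovich system. -/
theorem rabinovich_hamilton_poisson_Pabc (α β γ : ℝ) (hα : α ≠ 0) :
    ∀ x : Fin 3 → ℝ,
      (Pabc α β γ x).mulVec (grad (fun y => (y 0 ^ 2 + y 1 ^ 2) / (2 * α)) x) =
        rabinovichField x := by
  intro x
  rw [grad_sq_add_sq_div]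
  exact Pabc_mulVec_eq_rabinovichField β γ hα x
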